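/- The set of normal words — Ω-words u over Ω = {≺, ≻} such that u contains no subword of the form (a ≻ b) ≺ c — forms a k-basis of the free L-algebra L(X) = k(X,Ω)/Id((x≻y)≺z − x≻(y≺z)). Equivalently, normal words are characterized inductively: every x ∈ X is normal; v ≻ w is normal if v, w are; v ≺ w is normal if v, w are normal and v is not of the form v_1 ≻ v_2. -/
import Mathlib


/-- Ω-words for Ω = {≺, ≻}: `p u v` denotes u ≺ v and `s u v` denotes u ≻ v. -/
inductive LW (X : Type) : Type
  | var : X → LW X
  | p : LW X → LW X → LW X
  | s : LW X → LW X → LW X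
deriving DecidableEq

namespace LW

variable {X : Type}

/-- number of occurrences of variables, |u|_X -/
def szX : LW X → ℕ
  | var _ => 1
  | p u v => szX u + szX v
  | s u v => szX u + szX v

/-- The weight-lexicographic ordering on Ω-words: wt(x) = (1,x),
wt(δᵢ(u₁,u₂)) = (|u|_X, δᵢ, u₁, u₂) with ≻ < ≺, compared lexicographically. -/
inductive LLt [LinearOrder X] : LW X → LW X → Prop
  | size {u v : LW X} : szX u < szX v → LLt u v
  | var {x y : X} : x < y → LLt (var x) (var y)
  | sp {u1 u2 v1 v2 : LW X} : szX (s u1 u2) = szX (p v1 v2) → LLt (s u1 u2) (p v1 v2)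
  | s1 {u1 u2 v1 v2 : LW X} : szX (s u1 u2) = szX (s v1 v2) → LLt u1 v1 →
      LLt (s u1 u2) (s v1 v2)
  | s2 {u1 u2 v2 : LW X} : szX (s u1 u2) = szX (s u1 v2) → LLt u2 v2 →
      LLt (s u1 u2) (s u1 v2)
  | p1 {u1 u2 v1 v2 : LW X} : szX (p u1 u2) = szX (p v1 v2) → LLt u1 v1 →
      LLt (p u1 u2) (p v1 v2)
  | p2 {u1 u2 v2 : LW X} : szX (p u1 u2) = szX (p u1 v2) → LLt u2 v2 →
      LLt (p u1 u2) (p u1 v2)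

/-- Normal words: x ∈ X is normal; v ≻ w is normal if v, w are; v ≺ w is normal
if v, w are normal and v is not of the form v₁ ≻ v₂. -/
inductive Normal : LW X → Prop
  | var {x : X} : Normal (var x)
  | suc {u v : LW X} : Normal u → Normal v → Normal (s u v)
  | pre {u v : LW X} : Normal u → Normal v → (∀ a b, u ≠ s a b) → Normal (p u v)

end LW

/-- A ⋆-Ω-word for Ω = {≺,≻}. -/
inductive LCtx (X : Type) : Type
  | hole : LCtx X
  | pL : LCtx X → LW X → LCtx X
  | pR : LW X → LCtx X → LCtx X
  | sL : LCtx X → LW X → LCtx X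
  | sR : LW X → LCtx X → LCtx X

/-- Substitution of an Ω-word for ⋆ in a ⋆-Ω-word. -/
def LCtx.subst {X : Type} : LCtx X → LW X → LW X
  | .hole, u => u
  | .pL c w, u => .p (c.subst u) w
  | .pR w c, u => .p w (c.subst u)
  | .sL c w, u => .s (c.subst u) w
  | .sR w c, u => .s w (c.subst u)
section

variable {X k : Type} [Field k]

/-- The free Ω-algebra k(X,Ω), Ω = {≺,≻}. -/
abbrev LPoly (X k : Type) [Field k] := LW X →₀ k

/-- The s-Ω-word u|_s, extended linearly. -/
noncomputable def applyC (c : LCtx X) (f : LPoly X k) : LPoly X k :=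
  Finsupp.mapDomain c.subst f

/-- The Ω-ideal of k(X,Ω) generated by all (x≻y)≺z − x≻(y≺z). -/
noncomputable def LRelId (X k : Type) [Field k] : Submodule k (LPoly X k) :=
  Submodule.span k {g | ∃ (c : LCtx X) (x y z : LW X),
    g = applyC c (Finsupp.single (.p (.s x y) z) (1 : k)
          - Finsupp.single (.s x (.p y z)) (1 : k))}

/-- The free L-algebra L(X) = k(X,Ω)/Id((x≻y)≺z − x≻(y≺z)). -/
abbrev FreeL (X k : Type) [Field k] := LPoly X k ⧸ LRelId X k

/-- The image of an Ω-word in the free L-algebra. -/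
noncomputable def lmk (X k : Type) [Field k] (w : LW X) : FreeL X k :=
  Submodule.Quotient.mk (Finsupp.single w (1 : k))

end
/-- u contains a subword of the form (a≻b)≺c. -/
def LW.hasBad {X : Type} : LW X → Prop
  | .var _ => False
  | .p u v => (∃ a b, u = .s a b) ∨ u.hasBad ∨ v.hasBad
  | .s u v => u.hasBad ∨ v.hasBad

namespace LWAux

open LW

variable {X : Type}

/-- Normal form of `p u v` when `u, v` are already normal. -/
def prec : LW X → LW X → LW X
  | .s a b, v => .s a (prec b v)
  | u, v => .p u v

@[simp] lemma prec_s (a b v : LW X) : prec (.s a b) v = .s a (prec b v) := rfl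

lemma prec_not_s (u v : LW X) (h : ∀ a b, u ≠ .s a b) : prec u v = .p u v := by
  cases u with
  | var x => rfl
  | p a b => rfl
  | s a b => exact absurd rfl (h a b)

/-- Normalization. -/
def nf : LW X → LW X
  | .var x => .var x
  | .p u v => prec (nf u) (nf v)
  | .s u v => .s (nf u) (nf v)

@[simp] lemma nf_var (x : X) : nf (.var x) = .var x := rfl
@[simp] lemma nf_p (u v : LW X) : nf (.p u v) = prec (nf u) (nf v) := rfl
@[simp] lemma nf_s (u v : LW X) : nf (.s u v) = .s (nf u) (nf v) := rfl

lemma prec_normal {u v : LW X} (hu : Normal u) (hv : Normal v) :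
    Normal (prec u v) := by
  induction u with
  | var x => exact Normal.pre hu hv (by intro a b h; cases h)
  | p a b iha ihb => exact Normal.pre hu hv (by intro a b h; cases h)
  | s a b iha ihb =>
    cases hu with
    | suc ha hb => exact Normal.suc ha (ihb hb)

lemma nf_normal (u : LW X) : Normal (nf u) := by
  induction u with
  | var x => exact Normal.var
  | p a b iha ihb => exact prec_normal iha ihb
  | s a b iha ihb => exact Normal.suc iha ihb

lemma nf_of_normal {u : LW X} (h : Normal u) : nf u = u := by
  induction h with
  | var => rfl
  | suc _ _ ihu ihv => simp [ihu, ihv]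
  | pre _ _ hns ihu ihv =>
    simp only [nf_p, ihu, ihv]
    exact prec_not_s _ _ hns

lemma nf_subst (c : LCtx X) {u v : LW X} (h : nf u = nf v) :
    nf (c.subst u) = nf (c.subst v) := by
  induction c with
  | hole => exact h
  | pL c w ih => simp [LCtx.subst, ih]
  | pR w c ih => simp [LCtx.subst, ih]
  | sL c w ih => simp [LCtx.subst, ih]
  | sR w c ih => simp [LCtx.subst, ih]

lemma nf_rel (x y z : LW X) : nf (.p (.s x y) z) = nf (.s x (.p y z)) := by
  simp

/-- Composition of contexts. -/
def LCtx.comp : LCtx X → LCtx X → LCtx X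
  | .hole, d => d
  | .pL c w, d => .pL (LCtx.comp c d) w
  | .pR w c, d => .pR w (LCtx.comp c d)
  | .sL c w, d => .sL (LCtx.comp c d) w
  | .sR w c, d => .sR w (LCtx.comp c d)

lemma subst_comp (c d : LCtx X) (u : LW X) :
    (LCtx.comp c d).subst u = c.subst (d.subst u) := by
  induction c with
  | hole => rfl
  | pL c w ih => simp [LCtx.comp, LCtx.subst, ih]
  | pR w c ih => simp [LCtx.comp, LCtx.subst, ih]
  | sL c w ih => simp [LCtx.comp, LCtx.subst, ih]
  | sR w c ih => simp [LCtx.comp, LCtx.subst, ih]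

variable {k : Type} [Field k]

lemma applyC_eq (c : LCtx X) (f : LPoly X k) :
    applyC c f = Finsupp.lmapDomain k k c.subst f := rfl

lemma applyC_sub (c : LCtx X) (f g : LPoly X k) :
    applyC c (f - g) = applyC c f - applyC c g := by
  simp [applyC_eq, map_sub]

lemma applyC_single (c : LCtx X) (w : LW X) :
    applyC c (Finsupp.single w (1 : k)) = Finsupp.single (c.subst w) (1 : k) := by
  simp [applyC, Finsupp.mapDomain_single]

lemma applyC_applyC (c d : LCtx X) (f : LPoly X k) :
    applyC c (applyC d f) = applyC (LCtx.comp c d) f := by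
  simp only [applyC]
  rw [← Finsupp.mapDomain_comp]
  congr 1
  funext u
  simp [Function.comp, subst_comp]

/-- The generating set of the Ω-ideal. -/
def genSet (X k : Type) [Field k] : Set (LPoly X k) :=
  {g | ∃ (c : LCtx X) (x y z : LW X),
    g = applyC c (Finsupp.single (.p (.s x y) z) (1 : k)
          - Finsupp.single (.s x (.p y z)) (1 : k))}

lemma lrelid_eq : LRelId X k = Submodule.span k (genSet X k) := rfl

lemma applyC_mem (c : LCtx X) {f : LPoly X k} (hf : f ∈ LRelId X k) :
    applyC c f ∈ LRelId X k := by
  rw [lrelid_eq] at hf ⊢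
  induction hf using Submodule.span_induction with
  | mem g hg =>
    obtain ⟨d, x, y, z, rfl⟩ := hg
    exact Submodule.subset_span ⟨LCtx.comp c d, x, y, z, applyC_applyC c d _⟩
  | zero => simp [applyC_eq, Submodule.zero_mem]
  | add a b _ _ ha hb =>
    rw [applyC_eq, map_add]
    exact Submodule.add_mem _ ha hb
  | smul r a _ ha =>
    rw [applyC_eq, map_smul]
    exact Submodule.smul_mem _ r ha

lemma gen_mem (x y z : LW X) :
    Finsupp.single (LW.p (.s x y) z) (1 : k) - Finsupp.single (LW.s x (.p y z)) (1 : k)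
      ∈ LRelId X k := by
  rw [lrelid_eq]
  refine Submodule.subset_span ⟨LCtx.hole, x, y, z, ?_⟩
  simp only [applyC, LCtx.subst]
  exact Finsupp.mapDomain_id.symm

lemma prec_mem (a b : LW X) :
    Finsupp.single (LW.p a b) (1 : k) - Finsupp.single (prec a b) (1 : k)
      ∈ LRelId X k := by
  induction a generalizing b with
  | var x => simp [prec, Submodule.zero_mem]
  | p u v ihu ihv => simp [prec, Submodule.zero_mem]
  | s u v ihu ihv =>
    have h1 := gen_mem (k := k) u v b
    have h2 : Finsupp.single (LW.s u (.p v b)) (1 : k)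
        - Finsupp.single (LW.s u (prec v b)) (1 : k) ∈ LRelId X k := by
      have := applyC_mem (LCtx.sR u LCtx.hole) (ihv b)
      rwa [applyC_sub, applyC_single, applyC_single] at this
    have := Submodule.add_mem _ h1 h2
    simpa [prec_s] using this

lemma nf_mem (u : LW X) :
    Finsupp.single u (1 : k) - Finsupp.single (nf u) (1 : k) ∈ LRelId X k := by
  induction u with
  | var x => simp [Submodule.zero_mem]
  | p a b iha ihb =>
    have h1 : Finsupp.single (LW.p a b) (1 : k)
        - Finsupp.single (LW.p (nf a) b) (1 : k) ∈ LRelId X k := by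
      have := applyC_mem (LCtx.pL LCtx.hole b) iha
      rwa [applyC_sub, applyC_single, applyC_single] at this
    have h2 : Finsupp.single (LW.p (nf a) b) (1 : k)
        - Finsupp.single (LW.p (nf a) (nf b)) (1 : k) ∈ LRelId X k := by
      have := applyC_mem (LCtx.pR (nf a) LCtx.hole) ihb
      rwa [applyC_sub, applyC_single, applyC_single] at this
    have h3 := prec_mem (k := k) (nf a) (nf b)
    have := Submodule.add_mem _ (Submodule.add_mem _ h1 h2) h3
    simpa using this
  | s a b iha ihb =>
    have h1 : Finsupp.single (LW.s a b) (1 : k)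
        - Finsupp.single (LW.s (nf a) b) (1 : k) ∈ LRelId X k := by
      have := applyC_mem (LCtx.sL LCtx.hole b) iha
      rwa [applyC_sub, applyC_single, applyC_single] at this
    have h2 : Finsupp.single (LW.s (nf a) b) (1 : k)
        - Finsupp.single (LW.s (nf a) (nf b)) (1 : k) ∈ LRelId X k := by
      have := applyC_mem (LCtx.sR (nf a) LCtx.hole) ihb
      rwa [applyC_sub, applyC_single, applyC_single] at this
    have := Submodule.add_mem _ h1 h2
    simpa using this

lemma lmk_nf (u : LW X) : lmk X k u = lmk X k (nf u) := by
  rw [lmk, lmk, Submodule.Quotient.eq]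
  exact nf_mem u

/-- Linear normalization map. -/
noncomputable def N (X k : Type) [Field k] : LPoly X k →ₗ[k] LPoly X k :=
  Finsupp.lmapDomain k k nf

@[simp] lemma N_single (w : LW X) :
    N X k (Finsupp.single w (1 : k)) = Finsupp.single (nf w) (1 : k) := by
  simp [N, Finsupp.mapDomain_single]

lemma N_vanish : LRelId X k ≤ LinearMap.ker (N X k) := by
  rw [lrelid_eq, Submodule.span_le]
  rintro g ⟨c, x, y, z, rfl⟩
  simp only [SetLike.mem_coe, LinearMap.mem_ker]
  rw [applyC_sub, applyC_single, applyC_single, map_sub, N_single, N_single,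
    nf_subst c (nf_rel x y z)]
  simp

/-- The normalization map descends to the quotient. -/
noncomputable def Nbar (X k : Type) [Field k] : FreeL X k →ₗ[k] LPoly X k :=
  Submodule.liftQ (LRelId X k) (N X k) N_vanish

@[simp] lemma Nbar_lmk (w : LW X) :
    Nbar X k (lmk X k w) = Finsupp.single (nf w) (1 : k) := by
  rw [lmk, Nbar, Submodule.liftQ_apply, N_single]

lemma normal_iff_not_hasBad (u : LW X) : LW.Normal u ↔ ¬ u.hasBad := by
  induction u with
  | var x => simp [LW.hasBad]; exact Normal.var
  | p a b iha ihb =>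
    constructor
    · rintro h hb
      cases h with
      | pre ha hb' hns =>
        rcases hb with ⟨x, y, hxy⟩ | hb | hb
        · exact hns x y hxy
        · exact (iha.mp ha) hb
        · exact (ihb.mp hb') hb
    · intro h
      simp only [LW.hasBad, not_or] at h
      refine Normal.pre (iha.mpr h.2.1) (ihb.mpr h.2.2) ?_
      intro x y hxy
      exact h.1 ⟨x, y, hxy⟩
  | s a b iha ihb =>
    constructor
    · rintro h hb
      cases h with
      | suc ha hb' =>
        rcases hb with hb | hb
        · exact (iha.mp ha) hb
        · exact (ihb.mp hb') hb
    · intro h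
      simp only [LW.hasBad, not_or] at h
      exact Normal.suc (iha.mpr h.1) (ihb.mpr h.2)

end LWAux

/-- the normal words (Ω-words with no subword (a≻b)≺c, equivalently
characterized by the inductive definition `LW.Normal`) form a k-basis of the free
L-algebra L(X). -/
theorem normal_words_basis (X k : Type) [Field k] :
    (∀ u : LW X, LW.Normal u ↔ ¬ u.hasBad) ∧
    LinearIndependent k (fun w : {w : LW X // LW.Normal w} => lmk X k w.1) ∧
    Submodule.span k (Set.range (fun w : {w : LW X // LW.Normal w} => lmk X k w.1)) = ⊤ := by
  open LWAux in
  refine ⟨normal_iff_not_hasBad, ?_, ?_⟩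
  · -- linear independence
    apply LinearIndependent.of_comp (Nbar X k)
    have hli : LinearIndependent k
        (fun w : {w : LW X // LW.Normal w} => (Finsupp.single w.1 (1 : k) : LPoly X k)) :=
      (Finsupp.basisSingleOne (R := k) (ι := LW X)).linearIndependent.comp
        Subtype.val Subtype.val_injective
    convert hli using 1
    funext w
    simp [Function.comp, Nbar_lmk, nf_of_normal w.2]
  · -- spanning
    have key : ∀ w : LW X, lmk X k w ∈
        Submodule.span k (Set.range (fun w : {w : LW X // LW.Normal w} => lmk X k w.1)) := by
      intro w
      rw [lmk_nf w]
      exact Submodule.subset_span ⟨⟨nf w, nf_normal w⟩, rfl⟩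
    have h1 : Submodule.span k (Set.range (lmk X k)) = ⊤ := by
      have hb := (Finsupp.basisSingleOne (R := k) (ι := LW X)).span_eq
      have h2 := congrArg (Submodule.map (LRelId X k).mkQ) hb
      rw [Submodule.map_span, Submodule.map_top, Submodule.range_mkQ] at h2
      rw [← h2]
      congr 1
      rw [← Set.range_comp]
      rfl
    rw [eq_top_iff, ← h1, Submodule.span_le]
    rintro _ ⟨w, rfl⟩
    exact key w
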